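/- Let m, n, N be positive integers and let p = (p_{i,j})_{0≤i≤m,0≤j≤n} be positive reals summing to 1, with p_i = Σ_{j=0}^n p_{i,j}. Then Δ_p(N, 1) = log(1 + 1/(N + (1+m)(1+n)/2)) − Σ_{i=0}^m H(p_i), where H(q) = q² · Σ_{x=0}^N C(N,x) q^x (1−q)^{N−x} · (− log(1 − 1/(x + 1 + (1+n)/2))) for q ∈ (0,1). -/

import Mathlib

open Finset

/-- Binomial(N, q) probability mass function at `x`. -/
noncomputable def binPMF (N : ℕ) (q : ℝ) (x : ℕ) : ℝ :=
  (N.choose x : ℝ) * q ^ x * (1 - q) ^ (N - x)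

/-- The entropy loss `L(d, p) = ∑ᵢ ∑ⱼ pᵢⱼ log (pᵢⱼ / dᵢⱼ)`. -/
noncomputable def entropyLoss {m n : ℕ} (d p : Fin (m+1) → Fin (n+1) → ℝ) : ℝ :=
  ∑ i, ∑ j, p i j * Real.log (p i j / d i j)

/-- Support of the Multinomial(N, p) distribution on (1+m)(1+n) cells. -/
def suppX (m n N : ℕ) : Finset (Fin (m+1) → Fin (n+1) → Fin (N+1)) :=
  Finset.univ.filter fun x => ∑ i, ∑ j, (x i j : ℕ) = N

/-- Support of the Multinomial(N', p·) distribution on 1+m cells. -/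
def suppY (m N' : ℕ) : Finset (Fin (m+1) → Fin (N'+1)) :=
  Finset.univ.filter fun y => ∑ i, (y i : ℕ) = N'

/-- Multinomial(N, p) probability of the outcome `x`. -/
noncomputable def wX {m n N : ℕ} (p : Fin (m+1) → Fin (n+1) → ℝ)
    (x : Fin (m+1) → Fin (n+1) → Fin (N+1)) : ℝ :=
  (Nat.multinomial Finset.univ (fun k : Fin (m+1) × Fin (n+1) => (x k.1 k.2 : ℕ)) : ℝ) *
    ∏ i, ∏ j, p i j ^ (x i j : ℕ)

/-- Multinomial(N', (pᵢ.)ᵢ) probability of the outcome `y`, where `pᵢ. = ∑ⱼ pᵢⱼ`. -/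
noncomputable def wY {m n N' : ℕ} (p : Fin (m+1) → Fin (n+1) → ℝ)
    (y : Fin (m+1) → Fin (N'+1)) : ℝ :=
  (Nat.multinomial Finset.univ (fun i => (y i : ℕ)) : ℝ) *
    ∏ i, (∑ j, p i j) ^ (y i : ℕ)

/-- The estimator `p̃` based on the direct observations only. -/
noncomputable def ptilde {m n N : ℕ} (x : Fin (m+1) → Fin (n+1) → Fin (N+1)) :
    Fin (m+1) → Fin (n+1) → ℝ :=
  fun i j => ((x i j : ℝ) + 1/2) / ((N : ℝ) + (1 + m) * (1 + n) / 2)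

/-- The estimator `p̂` based on the direct and aggregated observations. -/
noncomputable def phat {m n N N' : ℕ} (x : Fin (m+1) → Fin (n+1) → Fin (N+1))
    (y : Fin (m+1) → Fin (N'+1)) : Fin (m+1) → Fin (n+1) → ℝ :=
  fun i j =>
    ((((∑ j', (x i j' : ℕ)) : ℕ) : ℝ) + (y i : ℝ) + (1 + n) / 2) /
        ((N : ℝ) + (N' : ℝ) + (1 + m) * (1 + n) / 2) *
      (((x i j : ℝ) + 1/2) / ((((∑ j', (x i j' : ℕ)) : ℕ) : ℝ) + (1 + n) / 2))

/-- The risk difference `Δ_p(N, N') = E_p[L(p̂, p)] − E_p[L(p̃, p)]`, the expectation being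
a finite sum over the supports of the independent multinomial observations. -/
noncomputable def riskDiff (m n : ℕ) (p : Fin (m+1) → Fin (n+1) → ℝ) (N N' : ℕ) : ℝ :=
  ∑ x ∈ suppX m n N, ∑ y ∈ suppY m N',
    wX p x * wY p y * (entropyLoss (phat x y) p - entropyLoss (ptilde x) p)

/-! The ratio `p̃ᵢⱼ / p̂ᵢⱼ = (1 + N'/D) (Xᵢ + a) / (Xᵢ + Yᵢ + a)`, with `D = N + (1+m)(1+n)/2` and
`a = (1+n)/2`, does not depend on `j`, so the loss difference is
`log (1 + N'/D) + ∑ᵢ pᵢ log (1 - Yᵢ / (Xᵢ + Yᵢ + a))`. Both `Xᵢ` and `Yᵢ` are binomial, as marginals of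
multinomials: for `N' = 1`, `Yᵢ` is Bernoulli(`pᵢ`) and `Yᵢ = 0` contributes `log 1 = 0`, which leaves
`pᵢ² log (1 - 1/(Xᵢ + 1 + a))`; averaging over `Xᵢ ~ Binomial(N, pᵢ)` gives `-H(pᵢ)`. -/

open Polynomial

theorem Polynomial.coeff_sum_C_mul_X_pow {α R : Type*} [Semiring R] (s : Finset α) (c : α → R)
    (e : α → ℕ) (k : ℕ) :
    (∑ a ∈ s, C (c a) * X ^ e a).coeff k = ∑ a ∈ s with e a = k, c a := by
  simp [finsetSum_coeff, sum_filter, eq_comm]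

theorem Polynomial.coeff_C_mul_X_add_C_pow {R : Type*} [CommSemiring R] (a b : R) (N k : ℕ) :
    ((C a * X + C b) ^ N).coeff k = if k ≤ N then N.choose k * a ^ k * b ^ (N - k) else 0 := by
  have hexpand : (C a * X + C b) ^ N =
      ∑ j ∈ range (N + 1), C (N.choose j * a ^ j * b ^ (N - j)) * X ^ j := by
    rw [add_pow]
    refine sum_congr rfl fun j _ => ?_
    simp only [mul_pow, ← C_pow, map_mul, map_natCast]
    ring
  rw [hexpand, coeff_sum_C_mul_X_pow, filter_eq']
  simp only [mem_range, Nat.lt_succ_iff]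
  split_ifs <;> simp

theorem sum_multinomial_mul_apply_sum_eq {ι R : Type*} [Fintype ι] [DecidableEq ι]
    [CommSemiring R] (A : Finset ι) (q : ι → R) (N : ℕ) (g : ℕ → R) :
    ∑ f ∈ piAntidiag univ N, Nat.multinomial univ f * (∏ i, q i ^ f i) * g (∑ i ∈ A, f i) =
      ∑ k ∈ range (N + 1),
        N.choose k * (∑ i ∈ A, q i) ^ k * (∑ i ∈ Aᶜ, q i) ^ (N - k) * g k := by
  -- Marking the coordinates in `A` by `X`, the multinomial theorem makes the coefficient of `X ^ k`
  -- the total weight of the fibre `∑ i ∈ A, f i = k`.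
  have hgen : (C (∑ i ∈ A, q i) * X + C (∑ i ∈ Aᶜ, q i)) ^ N =
      ∑ f ∈ piAntidiag univ N,
        C (Nat.multinomial univ f * ∏ i, q i ^ f i) * X ^ (∑ i ∈ A, f i) := by
    have hmark : C (∑ i ∈ A, q i) * X + C (∑ i ∈ Aᶜ, q i) =
        ∑ i, C (q i) * X ^ (if i ∈ A then 1 else 0) := by
      rw [← sum_add_sum_compl A, map_sum, map_sum, sum_mul]
      congr 1 <;> refine sum_congr rfl fun i hi => ?_
      · simp [hi]
      · simp [mem_compl.mp hi]
    rw [hmark, sum_pow_eq_sum_piAntidiag]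
    refine sum_congr rfl fun f _ => ?_
    simp only [mul_pow, prod_mul_distrib, ← pow_mul, prod_pow_eq_pow_sum, ← C_pow, ← map_prod,
      map_mul, map_natCast, mul_assoc]
    simp [sum_ite_mem]
  have hfiber : ∀ k ∈ range (N + 1),
      ∑ f ∈ piAntidiag univ N with ∑ i ∈ A, f i = k,
          (Nat.multinomial univ f * ∏ i, q i ^ f i : R) =
        N.choose k * (∑ i ∈ A, q i) ^ k * (∑ i ∈ Aᶜ, q i) ^ (N - k) := by
    intro k hk
    have hcoeff := congrArg (coeff · k) hgen
    simp only [coeff_C_mul_X_add_C_pow, coeff_sum_C_mul_X_pow] at hcoeff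
    rw [← hcoeff, if_pos (Nat.lt_succ_iff.mp (mem_range.mp hk))]
  have hmaps : ∀ f ∈ piAntidiag univ N, ∑ i ∈ A, f i ∈ range (N + 1) := fun f hf => by
    rw [mem_range, Nat.lt_succ_iff, ← (mem_piAntidiag.mp hf).1]
    exact sum_le_sum_of_subset (subset_univ A)
  rw [← sum_fiberwise_of_maps_to hmaps]
  refine sum_congr rfl fun k hk => ?_
  rw [← hfiber k hk, sum_mul]
  exact sum_congr rfl fun f hf => by rw [(mem_filter.mp hf).2]

theorem sum_multinomial_mul_eq_sum_binPMF {ι : Type*} [Fintype ι] [DecidableEq ι]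
    (A : Finset ι) (q : ι → ℝ) (hq : ∑ i, q i = 1) (N : ℕ) (g : ℕ → ℝ) :
    ∑ f ∈ piAntidiag univ N, Nat.multinomial univ f * (∏ i, q i ^ f i) * g (∑ i ∈ A, f i) =
      ∑ k ∈ range (N + 1), binPMF N (∑ i ∈ A, q i) k * g k := by
  have hcompl : ∑ i ∈ Aᶜ, q i = 1 - ∑ i ∈ A, q i := by
    rw [← hq, ← sum_add_sum_compl A]; ring
  simp only [sum_multinomial_mul_apply_sum_eq, hcompl, binPMF]

theorem sum_binPMF (N : ℕ) (q : ℝ) : ∑ k ∈ range (N + 1), binPMF N q k = 1 := by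
  calc ∑ k ∈ range (N + 1), binPMF N q k
      = ∑ k ∈ range (N + 1), q ^ k * (1 - q) ^ (N - k) * N.choose k :=
        sum_congr rfl fun k _ => by rw [binPMF]; ring
    _ = 1 := by rw [← add_pow, add_sub_cancel, one_pow]

theorem sum_binPMF_one_mul (q : ℝ) (g : ℕ → ℝ) :
    ∑ k ∈ range 2, binPMF 1 q k * g k = (1 - q) * g 0 + q * g 1 := by
  simp [sum_range_succ, binPMF]

theorem sum_filter_sum_val_eq_sum_piAntidiag {ι M : Type*} [Fintype ι] [DecidableEq ι]
    [AddCommMonoid M] (N : ℕ) (G : (ι → ℕ) → M) :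
    ∑ x : ι → Fin (N + 1) with ∑ i, (x i : ℕ) = N, G (fun i => x i) =
      ∑ f ∈ piAntidiag univ N, G f := by
  refine sum_bij (fun x _ i => x i) (fun x hx => by simpa using hx)
    (fun x _ y _ h => funext fun i => Fin.ext (congrFun h i)) (fun f hf => ?_) fun _ _ => rfl
  have hle : ∀ i, f i < N + 1 := fun i =>
    Nat.lt_succ_of_le <|
      (mem_piAntidiag.mp hf).1 ▸ single_le_sum (fun _ _ => Nat.zero_le _) (mem_univ i)
  exact ⟨fun i => ⟨f i, hle i⟩, by simpa using (mem_piAntidiag.mp hf).1, rfl⟩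

theorem sum_suppX_eq_sum_piAntidiag {m n N : ℕ} {M : Type*} [AddCommMonoid M]
    (G : (Fin (m + 1) × Fin (n + 1) → ℕ) → M) :
    ∑ x ∈ suppX m n N, G (fun k => x k.1 k.2) = ∑ f ∈ piAntidiag univ N, G f := by
  rw [← sum_filter_sum_val_eq_sum_piAntidiag]
  refine sum_equiv (Equiv.curry _ _ _).symm (fun x => ?_) fun _ _ => rfl
  simp [suppX, Fintype.sum_prod_type]

theorem sum_suppX_wX_mul_eq {m n N : ℕ} (p : Fin (m + 1) → Fin (n + 1) → ℝ)
    (hsum : ∑ i, ∑ j, p i j = 1) (i₀ : Fin (m + 1)) (g : ℕ → ℝ) :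
    ∑ x ∈ suppX m n N, wX p x * g (∑ j, (x i₀ j : ℕ)) =
      ∑ k ∈ range (N + 1), binPMF N (∑ j, p i₀ j) k * g k := by
  have hrow := sum_multinomial_mul_eq_sum_binPMF ({i₀} ×ˢ univ) (fun k => p k.1 k.2)
    (by rwa [Fintype.sum_prod_type]) N g
  simp only [sum_product, sum_singleton] at hrow
  rw [← hrow, ← sum_suppX_eq_sum_piAntidiag]
  simp only [wX, Fintype.prod_prod_type]

theorem sum_suppY_wY_mul_eq {m n N' : ℕ} (p : Fin (m + 1) → Fin (n + 1) → ℝ)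
    (hsum : ∑ i, ∑ j, p i j = 1) (i₀ : Fin (m + 1)) (g : ℕ → ℝ) :
    ∑ y ∈ suppY m N', wY p y * g (y i₀) =
      ∑ k ∈ range (N' + 1), binPMF N' (∑ j, p i₀ j) k * g k := by
  have hcell := sum_multinomial_mul_eq_sum_binPMF {i₀} (fun i => ∑ j, p i j) hsum N' g
  simp only [sum_singleton] at hcell
  rw [← hcell, ← sum_filter_sum_val_eq_sum_piAntidiag]
  rfl

theorem mul_log_div_sub_mul_log_div (c : ℝ) {a b : ℝ} (ha : a ≠ 0) (hb : b ≠ 0) :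
    c * Real.log (c / a) - c * Real.log (c / b) = c * Real.log (b / a) := by
  rcases eq_or_ne c 0 with rfl | hc
  · simp
  rw [Real.log_div hc ha, Real.log_div hc hb, Real.log_div hb ha]
  ring

theorem entropyLoss_phat_sub_entropyLoss_ptilde {m n N N' : ℕ}
    (p : Fin (m + 1) → Fin (n + 1) → ℝ) (x : Fin (m + 1) → Fin (n + 1) → Fin (N + 1))
    (y : Fin (m + 1) → Fin (N' + 1)) :
    entropyLoss (phat x y) p - entropyLoss (ptilde x) p =
      (∑ i, ∑ j, p i j) * Real.log (1 + N' / ((N : ℝ) + (1 + m) * (1 + n) / 2)) +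
        ∑ i, (∑ j, p i j) * Real.log
          (1 - (y i : ℝ) / ((∑ j, (x i j : ℕ) : ℕ) + (y i : ℝ) + (1 + n) / 2)) := by
  simp only [entropyLoss, ← sum_sub_distrib, sum_mul, ← sum_add_distrib]
  refine sum_congr rfl fun i _ => sum_congr rfl fun j _ => ?_
  have hratio : ptilde x i j / phat x y i j = (1 + N' / ((N : ℝ) + (1 + m) * (1 + n) / 2)) *
      (1 - (y i : ℝ) / ((∑ j, (x i j : ℕ) : ℕ) + (y i : ℝ) + (1 + n) / 2)) := by
    simp only [ptilde, phat]
    field_simp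
    ring
  have hrow : 0 < ((∑ j, (x i j : ℕ) : ℕ) : ℝ) + (1 + n) / 2 := by positivity
  rw [mul_log_div_sub_mul_log_div _ (by simp only [phat]; positivity)
    (by simp only [ptilde]; positivity), hratio, Real.log_mul (by positivity)
    (sub_pos.mpr ((div_lt_one (by positivity)).mpr (by linarith))).ne']
  ring

theorem sum_suppY_one_wY_mul_entropyLoss_sub {m n N : ℕ} (p : Fin (m + 1) → Fin (n + 1) → ℝ)
    (hsum : ∑ i, ∑ j, p i j = 1) (x : Fin (m + 1) → Fin (n + 1) → Fin (N + 1)) :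
    ∑ y ∈ suppY m 1, wY p y * (entropyLoss (phat x y) p - entropyLoss (ptilde x) p) =
      Real.log (1 + 1 / ((N : ℝ) + (1 + m) * (1 + n) / 2)) +
        ∑ i, (∑ j, p i j) ^ 2 *
          Real.log (1 - 1 / ((∑ j, (x i j : ℕ) : ℕ) + 1 + (1 + n) / 2)) := by
  have htotal : ∑ y ∈ suppY m 1, wY p y = 1 := by
    simpa [sum_binPMF] using sum_suppY_wY_mul_eq p hsum 0 fun _ => 1
  simp only [entropyLoss_phat_sub_entropyLoss_ptilde, hsum, one_mul, mul_add, mul_sum,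
    sum_add_distrib]
  rw [← sum_mul, htotal, one_mul, sum_comm, Nat.cast_one]
  congr 1
  refine sum_congr rfl fun i _ => ?_
  refine (sum_suppY_wY_mul_eq (N' := 1) p hsum i fun k => (∑ j, p i j) *
    Real.log (1 - (k : ℝ) / ((∑ j, (x i j : ℕ) : ℕ) + k + (1 + n) / 2))).trans ?_
  rw [sum_binPMF_one_mul]
  simp only [Nat.cast_zero, Nat.cast_one, zero_div, sub_zero, Real.log_one, mul_zero, add_zero]
  ring

theorem risk_difference_single_aggregated_general (m n N : ℕ)
    (p : Fin (m+1) → Fin (n+1) → ℝ)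
    (hsum : ∑ i, ∑ j, p i j = 1)
    (H : ℝ → ℝ)
    (hH : ∀ q : ℝ, H q = q ^ 2 * ∑ x ∈ Finset.range (N+1),
      binPMF N q x * (- Real.log (1 - 1 / ((x : ℝ) + 1 + (1 + n) / 2)))) :
    riskDiff m n p N 1 =
      Real.log (1 + 1 / ((N : ℝ) + (1 + m) * (1 + n) / 2)) - ∑ i, H (∑ j, p i j) := by
  have htotal : ∑ x ∈ suppX m n N, wX p x = 1 := by
    simpa [sum_binPMF] using sum_suppX_wX_mul_eq p hsum 0 fun _ => 1
  calc riskDiff m n p N 1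
      = ∑ x ∈ suppX m n N, wX p x * (Real.log (1 + 1 / ((N : ℝ) + (1 + m) * (1 + n) / 2)) +
          ∑ i, (∑ j, p i j) ^ 2 *
            Real.log (1 - 1 / ((∑ j, (x i j : ℕ) : ℕ) + 1 + (1 + n) / 2))) := by
        simp only [riskDiff, mul_assoc, ← mul_sum, sum_suppY_one_wY_mul_entropyLoss_sub p hsum]
    _ = Real.log (1 + 1 / ((N : ℝ) + (1 + m) * (1 + n) / 2)) +
          ∑ i, (∑ j, p i j) ^ 2 * ∑ x ∈ suppX m n N, wX p x *
            Real.log (1 - 1 / ((∑ j, (x i j : ℕ) : ℕ) + 1 + (1 + n) / 2)) := by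
        simp only [mul_add, sum_add_distrib, ← sum_mul, htotal, one_mul, mul_sum]
        rw [sum_comm]
        exact congrArg _ (sum_congr rfl fun _ _ => sum_congr rfl fun _ _ => mul_left_comm _ _ _)
    _ = Real.log (1 + 1 / ((N : ℝ) + (1 + m) * (1 + n) / 2)) +
          ∑ i, (∑ j, p i j) ^ 2 * ∑ k ∈ range (N + 1), binPMF N (∑ j, p i j) k *
            Real.log (1 - 1 / ((k : ℝ) + 1 + (1 + n) / 2)) := by
        congr 1
        refine sum_congr rfl fun i _ => congrArg _ ?_
        exact sum_suppX_wX_mul_eq p hsum i fun k => Real.log (1 - 1 / ((k : ℝ) + 1 + (1 + n) / 2))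
    _ = _ := by simp [hH, mul_sum]

theorem risk_difference_single_aggregated (m n N : ℕ)
    (hm : 1 ≤ m) (hn : 1 ≤ n) (hN : 1 ≤ N)
    (p : Fin (m+1) → Fin (n+1) → ℝ) (hp : ∀ i j, 0 < p i j)
    (hsum : ∑ i, ∑ j, p i j = 1)
    (H : ℝ → ℝ)
    (hH : ∀ q : ℝ, H q = q ^ 2 * ∑ x ∈ Finset.range (N+1),
      binPMF N q x * (- Real.log (1 - 1 / ((x : ℝ) + 1 + (1 + n) / 2)))) :
    riskDiff m n p N 1 =
      Real.log (1 + 1 / ((N : ℝ) + (1 + m) * (1 + n) / 2)) - ∑ i, H (∑ j, p i j) :=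
  risk_difference_single_aggregated_general m n N p hsum H hH
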